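/- arXiv:1911.02768 — 3 statements merged into one kernel-verified Lean document; each statement's English description precedes it below -/
import Mathlib

section
/- Suppose the treatment propensities satisfy $e_t(w) \geq C t^{-\alpha}$ for some $\alpha\in[0,1)$ and positive constant $C$. Then the variance-stabilizing weights defined recursively by $h_t^2(w)/e_t(w) = (1 - \sum_{s=1}^{t-1} h_s^2(w)/e_s(w))\,\lambda_t(w)$, for a history-adapted allocation rate $\lambda_t(w)$ with $\lambda_t(w) < 1$ for $t < T$ and $\lambda_T(w) = 1$, are history-adapted and satisfy the infinite sampling, variance convergence, and bounded moments assumptions, provided that for some finite positive constant $C'$ the allocation rate satisfies $\frac{1}{T-t+1} \leq \lambda_t(w) \leq C' \frac{e_t(w)}{t^{-\alpha} + T^{1-\alpha} - t^{1-\alpha}}$ for all $t$. -/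
open MeasureTheory ProbabilityTheory Filter Finset Topology

lemma Dbound {α t T : ℝ} (hα0 : 0 ≤ α) (hα1 : α < 1) (ht : 1 ≤ t) (htT : t ≤ T) :
    (1 - α) * (T - t + 1) * T ^ (-α) ≤ t ^ (-α) + T ^ ((1:ℝ) - α) - t ^ ((1:ℝ) - α) := by
  have hT : (0:ℝ) < T := by linarith
  have htpos : (0:ℝ) < t := by linarith
  have hdivnn : (0:ℝ) ≤ t / T := by positivity
  have h1 : (1 - α) * (T - t) * T ^ (-α) ≤ T ^ ((1:ℝ) - α) - t ^ ((1:ℝ) - α) := by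
    have hb := rpow_one_add_le_one_add_mul_self (s := t / T - 1)
      (by linarith) (p := 1 - α) (by linarith) (by linarith)
    rw [add_sub_cancel] at hb
    have hTp : (0:ℝ) < T ^ ((1:ℝ) - α) := Real.rpow_pos_of_pos hT _
    have hmul := mul_le_mul_of_nonneg_right hb hTp.le
    rw [Real.div_rpow htpos.le hT.le, div_mul_cancel₀ _ (ne_of_gt hTp)] at hmul
    have hrw : T ^ ((1:ℝ) - α) = T ^ (-α) * T := by
      rw [show (1:ℝ) - α = -α + 1 by ring, Real.rpow_add hT, Real.rpow_one]
    have hkey : (1 + (1 - α) * (t / T - 1)) * T ^ ((1:ℝ) - α)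
        = T ^ ((1:ℝ) - α) - (1 - α) * (T - t) * T ^ (-α) := by
      rw [hrw]; field_simp; ring
    linarith [hmul, hkey]
  have h2 : (1 - α) * T ^ (-α) ≤ t ^ (-α) := by
    have := Real.rpow_le_rpow_of_nonpos htpos htT (neg_nonpos.mpr hα0)
    have hp := Real.rpow_pos_of_pos hT (-α)
    nlinarith
  nlinarith


/-- **Theorem 2 (construction of variance-stabilizing weights for an arm value).**
Suppose the assignment probabilities satisfy `eₜ(w) ≥ C t^{-α}` with `α ∈ [0,1)` and
`C > 0`.  Consider the triangular array of "variance-stabilizing" weights `h T t`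
defined by the stick-breaking recursion
`h_t² / e_t = (1 - ∑_{s<t} h_s²/e_s) λ_t`, where the history-adapted allocation rate
`λ` satisfies `λ_t < 1` for `t < T`, `λ_T = 1` and
`1/(T-t+1) ≤ λ_t ≤ C' e_t / (t^{-α} + T^{1-α} - t^{1-α})`.
Then the weights are history-adapted and satisfy the infinite-sampling,
variance-convergence (in `Lᵖ` for some `p > 1`) and bounded-moments
(for some `δ > 0`) assumptions. -/
theorem variance_stabilizing_weights
    {Ω : Type*} [mΩ : MeasurableSpace Ω] (μ : Measure Ω) [IsProbabilityMeasure μ]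
    (ℱ : Filtration ℕ mΩ)
    (e : ℕ → Ω → ℝ) (h lam : ℕ → ℕ → Ω → ℝ)
    (α C : ℝ) (hα0 : 0 ≤ α) (hα1 : α < 1) (hC : 0 < C)
    -- assignment probabilities: positive, at most one, history-adapted, and
    -- decaying no faster than `C t^{-α}`
    (hepos : ∀ t ω, 0 < e t ω) (hele : ∀ t ω, e t ω ≤ 1)
    (hemeas : ∀ t, 1 ≤ t → StronglyMeasurable[ℱ (t - 1)] (e t))
    (heLB : ∀ (t : ℕ) ω, 1 ≤ t → C * (t : ℝ) ^ (-α) ≤ e t ω)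
    -- the allocation rate is history-adapted, `< 1` before `T`, `= 1` at `T`
    (hlam_meas : ∀ T t, 1 ≤ t → t ≤ T → StronglyMeasurable[ℱ (t - 1)] (lam T t))
    (hlam_lt : ∀ T t ω, 1 ≤ t → t < T → lam T t ω < 1)
    (hlam_last : ∀ T ω, 1 ≤ T → lam T T ω = 1)
    -- allocation-rate bounds, for some finite positive constant `C'`
    (hlam_bounds : ∃ C' : ℝ, 0 < C' ∧ ∀ (T t : ℕ) ω, 1 ≤ t → t ≤ T →
      1 / ((T : ℝ) - t + 1) ≤ lam T t ω ∧
      lam T t ω ≤ C' * e t ω /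
        ((t : ℝ) ^ (-α) + (T : ℝ) ^ ((1 : ℝ) - α) - (t : ℝ) ^ ((1 : ℝ) - α)))
    -- the variance-stabilizing weights: non-negative, defined by the recursion
    (hh_nonneg : ∀ T t ω, 0 ≤ h T t ω)
    (hrec : ∀ T t ω, 1 ≤ t → t ≤ T →
      (h T t ω) ^ 2 / e t ω =
        (1 - ∑ s ∈ Finset.Icc 1 (t - 1), (h T s ω) ^ 2 / e s ω) * lam T t ω) :
    -- the weights are history-adapted …
    (∀ T t, 1 ≤ t → t ≤ T → StronglyMeasurable[ℱ (t - 1)] (h T t)) ∧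
    -- … satisfy Assumption 1 (infinite sampling) …
    (∀ M : ℝ, Tendsto (fun T =>
      (μ {ω | (∑ t ∈ Finset.Icc 1 T, h T t ω) ^ 2 ≤
        M * ∫ ω', ∑ t ∈ Finset.Icc 1 T, (h T t ω') ^ 2 / e t ω' ∂μ}).toReal)
      atTop (𝓝 0)) ∧
    -- … Assumption 2 (variance convergence in Lᵖ for some p > 1) …
    (∃ p : ℝ, 1 < p ∧ Tendsto (fun T => ∫ ω,
      |(∑ t ∈ Finset.Icc 1 T, (h T t ω) ^ 2 / e t ω) /
          (∫ ω', ∑ t ∈ Finset.Icc 1 T, (h T t ω') ^ 2 / e t ω' ∂μ) - 1| ^ p ∂μ)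
      atTop (𝓝 0)) ∧
    -- … and Assumption 3 (bounded moments for some δ > 0)
    (∃ δ : ℝ, 0 < δ ∧ ∀ ε : ℝ, 0 < ε → Tendsto (fun T =>
      (μ {ω | ε ≤ (∑ t ∈ Finset.Icc 1 T, h T t ω ^ ((2 : ℝ) + δ) / e t ω ^ ((1 : ℝ) + δ)) /
          (∫ ω', ∑ t ∈ Finset.Icc 1 T, (h T t ω') ^ 2 / e t ω' ∂μ) ^ ((1 : ℝ) + δ / 2)}).toReal)
      atTop (𝓝 0)) := by
  
  obtain ⟨C', hC'pos, hlb⟩ := hlam_bounds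
  have h1α : (0:ℝ) < 1 - α := by linarith
  -- the stick-breaking identity
  have hprod : ∀ T t ω, t ≤ T →
      1 - ∑ s ∈ Finset.Icc 1 t, h T s ω ^ 2 / e s ω
        = ∏ s ∈ Finset.Icc 1 t, (1 - lam T s ω) := by
    intro T t ω
    induction t with
    | zero => simp
    | succ n ih =>
      intro hle
      rw [Finset.sum_Icc_succ_top (by omega : 1 ≤ n + 1),
        Finset.prod_Icc_succ_top (by omega : 1 ≤ n + 1)]
      have hr := hrec T (n + 1) ω (by omega) hle
      simp only [Nat.add_sub_cancel] at hr
      rw [hr, ← ih (by omega)]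
      ring
  have hlampos : ∀ T t ω, 1 ≤ t → t ≤ T → 0 < lam T t ω := by
    intro T t ω ht htT
    have hb := (hlb T t ω ht htT).1
    have hc : (t:ℝ) ≤ (T:ℝ) := Nat.cast_le.mpr htT
    have hpos : (0:ℝ) < (T:ℝ) - t + 1 := by linarith
    calc (0:ℝ) < 1 / ((T:ℝ) - t + 1) := by positivity
    _ ≤ lam T t ω := hb
  have hprod_nonneg : ∀ T t ω, t < T → 0 ≤ ∏ s ∈ Finset.Icc 1 t, (1 - lam T s ω) := by
    intro T t ω htT
    refine Finset.prod_nonneg fun s hs => ?_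
    obtain ⟨hs1, hs2⟩ := Finset.mem_Icc.mp hs
    have := hlam_lt T s ω hs1 (lt_of_le_of_lt hs2 htT)
    linarith
  have hprod_le : ∀ T t ω, t < T →
      ∏ s ∈ Finset.Icc 1 t, (1 - lam T s ω) ≤ ((T:ℝ) - t) / T := by
    intro T t ω
    induction t with
    | zero =>
      intro hT
      have : (0:ℝ) < (T:ℝ) := by exact_mod_cast hT
      simp [div_self (ne_of_gt this)]
    | succ n ih =>
      intro hlt
      have hn : n < T := by omega
      have hTn : (0:ℝ) < (T:ℝ) - n := by
        have : (n:ℝ) + 1 ≤ (T:ℝ) := by exact_mod_cast hlt.le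
        linarith
      have hTpos : (0:ℝ) < (T:ℝ) := by
        have : (0:ℕ) < T := by omega
        exact_mod_cast this
      rw [Finset.prod_Icc_succ_top (by omega : 1 ≤ n + 1)]
      have hlam_ub : 1 - lam T (n + 1) ω ≤ 1 - 1 / ((T:ℝ) - n) := by
        have hb := (hlb T (n + 1) ω (by omega) (by omega)).1
        have : (T:ℝ) - (n + 1 : ℕ) + 1 = (T:ℝ) - n := by push_cast; ring
        rw [this] at hb
        linarith
      have hlam_nn : 0 ≤ 1 - lam T (n + 1) ω := by
        have := hlam_lt T (n + 1) ω (by omega) hlt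
        linarith
      calc (∏ s ∈ Finset.Icc 1 n, (1 - lam T s ω)) * (1 - lam T (n + 1) ω)
          ≤ (((T:ℝ) - n) / T) * (1 - 1 / ((T:ℝ) - n)) := by
            apply mul_le_mul (ih hn) hlam_ub hlam_nn (by positivity)
        _ = ((T:ℝ) - (n + 1 : ℕ)) / T := by
            push_cast
            field_simp
            ring
  have hS_eq_one : ∀ T ω, 1 ≤ T → ∑ s ∈ Finset.Icc 1 T, h T s ω ^ 2 / e s ω = 1 := by
    intro T ω hT
    have hp := hprod T T ω le_rfl
    have hz : ∏ s ∈ Finset.Icc 1 T, (1 - lam T s ω) = 0 :=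
      Finset.prod_eq_zero (Finset.mem_Icc.mpr ⟨hT, le_rfl⟩)
        (by rw [hlam_last T ω hT]; ring)
    rw [hz] at hp
    linarith
  have hint : ∀ T, 1 ≤ T →
      (∫ ω', ∑ t ∈ Finset.Icc 1 T, (h T t ω') ^ 2 / e t ω' ∂μ) = 1 := by
    intro T hT
    rw [show (fun ω' => ∑ t ∈ Finset.Icc 1 T, (h T t ω') ^ 2 / e t ω')
        = fun _ => (1:ℝ) from funext fun ω => hS_eq_one T ω hT]
    simp
  -- the key deterministic bound on (h/e)²
  have hB : ∀ T t ω, 1 ≤ t → t ≤ T →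
      (h T t ω / e t ω) ^ 2 ≤ C' / ((1 - α) * (T:ℝ) ^ ((1:ℝ) - α)) := by
    intro T t ω ht htT
    have het := hepos t ω
    have hcast1 : (1:ℝ) ≤ (t:ℝ) := by exact_mod_cast ht
    have hcastT : (t:ℝ) ≤ (T:ℝ) := by exact_mod_cast htT
    have hTpos : (0:ℝ) < (T:ℝ) := by linarith
    have hD := Dbound hα0 hα1 hcast1 hcastT
    set D := (t:ℝ) ^ (-α) + (T:ℝ) ^ ((1:ℝ) - α) - (t:ℝ) ^ ((1:ℝ) - α) with hDdef
    have hTt1 : (0:ℝ) < (T:ℝ) - t + 1 := by linarith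
    have hDpos : 0 < D :=
      lt_of_lt_of_le (by positivity : (0:ℝ) < (1 - α) * ((T:ℝ) - t + 1) * (T:ℝ) ^ (-α)) hD
    have hr := hrec T t ω ht htT
    have hSle : 1 - ∑ s ∈ Finset.Icc 1 (t - 1), h T s ω ^ 2 / e s ω ≤ ((T:ℝ) - t + 1) / T := by
      rw [hprod T (t - 1) ω (by omega)]
      have hple := hprod_le T (t - 1) ω (by omega)
      have hc : ((t - 1 : ℕ) : ℝ) = (t:ℝ) - 1 := by
        have := Nat.cast_sub ht (R := ℝ); simpa using this
      rw [hc] at hple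
      rw [show (T:ℝ) - t + 1 = (T:ℝ) - ((t:ℝ) - 1) by ring]
      exact hple
    have hSnn : 0 ≤ 1 - ∑ s ∈ Finset.Icc 1 (t - 1), h T s ω ^ 2 / e s ω := by
      rw [hprod T (t - 1) ω (by omega)]
      exact hprod_nonneg T (t - 1) ω (by omega)
    have hlamle : lam T t ω / e t ω ≤ C' / D := by
      rw [div_le_div_iff₀ het hDpos]
      have hub := (hlb T t ω ht htT).2
      calc lam T t ω * D ≤ C' * e t ω / D * D :=
            mul_le_mul_of_nonneg_right hub hDpos.le
        _ = C' * e t ω := div_mul_cancel₀ _ (ne_of_gt hDpos)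
    have heq : (h T t ω / e t ω) ^ 2
        = (1 - ∑ s ∈ Finset.Icc 1 (t - 1), h T s ω ^ 2 / e s ω) * (lam T t ω / e t ω) := by
      have h2 : h T t ω ^ 2
          = (1 - ∑ s ∈ Finset.Icc 1 (t - 1), h T s ω ^ 2 / e s ω) * lam T t ω * e t ω :=
        (div_eq_iff (ne_of_gt het)).mp hr
      rw [div_pow, h2]
      field_simp
    rw [heq]
    have hlamnn : 0 ≤ lam T t ω / e t ω := le_of_lt (div_pos (hlampos T t ω ht htT) het)
    have hTα : (T:ℝ) ^ (-α) * (T:ℝ) = (T:ℝ) ^ ((1:ℝ) - α) := by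
      rw [show (1:ℝ) - α = -α + 1 by ring, Real.rpow_add hTpos, Real.rpow_one]
    calc (1 - ∑ s ∈ Finset.Icc 1 (t - 1), h T s ω ^ 2 / e s ω) * (lam T t ω / e t ω)
        ≤ (((T:ℝ) - t + 1) / T) * (C' / D) := mul_le_mul hSle hlamle hlamnn (by positivity)
      _ ≤ (((T:ℝ) - t + 1) / T) * (C' / ((1 - α) * ((T:ℝ) - t + 1) * (T:ℝ) ^ (-α))) := by
          have hD'pos : (0:ℝ) < (1 - α) * ((T:ℝ) - t + 1) * (T:ℝ) ^ (-α) := by positivity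
          gcongr
      _ = C' / ((1 - α) * (T:ℝ) ^ ((1:ℝ) - α)) := by
          rw [← hTα]
          have hne : (T:ℝ) ^ (-α) ≠ 0 := ne_of_gt (Real.rpow_pos_of_pos hTpos _)
          field_simp

  -- lower bound on the squared weight sum
  have hsum_ge : ∀ (T : ℕ) ω, 1 ≤ T →
      ((1 - α) * (T:ℝ) ^ ((1:ℝ) - α)) / C' ≤ (∑ t ∈ Finset.Icc 1 T, h T t ω) ^ 2 := by
    intro T ω hT
    have hTpos : (0:ℝ) < (T:ℝ) := by
      have h0 : 0 < T := hT
      exact_mod_cast h0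
    set X := (1 - α) * (T:ℝ) ^ ((1:ℝ) - α) with hXdef
    have hXpos : 0 < X := by positivity
    set K := Real.sqrt (C' / X) with hKdef
    have hKpos : 0 < K := Real.sqrt_pos.mpr (by positivity)
    have hK2 : K ^ 2 = C' / X := Real.sq_sqrt (by positivity)
    have hle : ∀ t ∈ Finset.Icc 1 T, h T t ω ^ 2 / e t ω ≤ K * h T t ω := by
      intro t hts
      obtain ⟨ht1, htT⟩ := Finset.mem_Icc.mp hts
      have het := hepos t ω
      have hratio : h T t ω / e t ω ≤ K := by
        have hb := hB T t ω ht1 htT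
        rw [← hK2] at hb
        have hnn : 0 ≤ h T t ω / e t ω := div_nonneg (hh_nonneg _ _ _) het.le
        nlinarith
      have hident : h T t ω ^ 2 / e t ω = h T t ω * (h T t ω / e t ω) := by
        field_simp
      rw [hident]
      calc h T t ω * (h T t ω / e t ω) ≤ h T t ω * K :=
            mul_le_mul_of_nonneg_left hratio (hh_nonneg _ _ _)
        _ = K * h T t ω := mul_comm _ _
    have h1le : 1 ≤ K * ∑ t ∈ Finset.Icc 1 T, h T t ω := by
      rw [← hS_eq_one T ω hT, Finset.mul_sum]
      exact Finset.sum_le_sum hle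
    have hsq : 1 ≤ (K * ∑ t ∈ Finset.Icc 1 T, h T t ω) ^ 2 := by nlinarith
    rw [mul_pow, hK2] at hsq
    rw [div_le_iff₀ hC'pos]
    have hmul := mul_le_mul_of_nonneg_right hsq hXpos.le
    have hcancel : C' / X * (∑ t ∈ Finset.Icc 1 T, h T t ω) ^ 2 * X
        = C' * (∑ t ∈ Finset.Icc 1 T, h T t ω) ^ 2 := by
      field_simp
    rw [hcancel, one_mul] at hmul
    linarith
  -- growth of the lower bound
  have hrpow_tend : Tendsto (fun T : ℕ => ((T:ℝ)) ^ ((1:ℝ) - α)) atTop atTop :=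
    (tendsto_rpow_atTop h1α).comp tendsto_natCast_atTop_atTop
  have htendX : Tendsto (fun T : ℕ => ((1 - α) * (T:ℝ) ^ ((1:ℝ) - α)) / C') atTop atTop := by
    have h2 : Tendsto (fun T : ℕ => (1 - α) / C' * (T:ℝ) ^ ((1:ℝ) - α)) atTop atTop :=
      hrpow_tend.const_mul_atTop (by positivity)
    exact h2.congr fun T => by ring
  have htendB : Tendsto (fun T : ℕ => C' / ((1 - α) * (T:ℝ) ^ ((1:ℝ) - α))) atTop (𝓝 0) := by
    have hdenom : Tendsto (fun T : ℕ => (1 - α) * (T:ℝ) ^ ((1:ℝ) - α)) atTop atTop :=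
      hrpow_tend.const_mul_atTop h1α
    exact tendsto_const_nhds.div_atTop hdenom
  refine ⟨?_, ?_, ?_, ?_⟩
  · -- measurability
    intro T t
    induction t using Nat.strong_induction_on with
    | _ t ih =>
      intro ht htT
      have heq : h T t = fun ω => Real.sqrt
          ((1 - ∑ s ∈ Finset.Icc 1 (t - 1), h T s ω ^ 2 / e s ω) * lam T t ω * e t ω) := by
        funext ω
        have hr := hrec T t ω ht htT
        have h2 : h T t ω ^ 2
            = (1 - ∑ s ∈ Finset.Icc 1 (t - 1), h T s ω ^ 2 / e s ω) * lam T t ω * e t ω :=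
          (div_eq_iff (ne_of_gt (hepos t ω))).mp hr
        rw [← h2, Real.sqrt_sq (hh_nonneg T t ω)]
      rw [heq]
      have hmeas_sum : Measurable[ℱ (t - 1)]
          fun ω => ∑ s ∈ Finset.Icc 1 (t - 1), h T s ω ^ 2 / e s ω := by
        refine Finset.measurable_sum _ fun s hs => ?_
        obtain ⟨hs1, hs2⟩ := Finset.mem_Icc.mp hs
        have hhm : Measurable[ℱ (t - 1)] (h T s) :=
          ((ih s (by omega) hs1 (by omega)).mono (ℱ.mono (by omega : s - 1 ≤ t - 1))).measurable
        have hem : Measurable[ℱ (t - 1)] (e s) :=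
          ((hemeas s hs1).mono (ℱ.mono (by omega : s - 1 ≤ t - 1))).measurable
        exact (hhm.pow_const 2).div hem
      exact (Real.continuous_sqrt.measurable.comp
        (((measurable_const.sub hmeas_sum).mul (hlam_meas T t ht htT).measurable).mul
          (hemeas t ht).measurable)).stronglyMeasurable
  · -- Assumption 1
    intro M
    have hev : ∀ᶠ T : ℕ in atTop,
        (μ {ω | (∑ t ∈ Finset.Icc 1 T, h T t ω) ^ 2 ≤
          M * ∫ ω', ∑ t ∈ Finset.Icc 1 T, (h T t ω') ^ 2 / e t ω' ∂μ}).toReal = 0 := by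
      filter_upwards [eventually_ge_atTop 1, htendX.eventually_gt_atTop M] with T hT hgt
      have hempty : {ω | (∑ t ∈ Finset.Icc 1 T, h T t ω) ^ 2 ≤
          M * ∫ ω', ∑ t ∈ Finset.Icc 1 T, (h T t ω') ^ 2 / e t ω' ∂μ} = ∅ := by
        ext ω
        simp only [Set.mem_setOf_eq, Set.mem_empty_iff_false, iff_false, not_le]
        rw [hint T hT, mul_one]
        calc M < ((1 - α) * (T:ℝ) ^ ((1:ℝ) - α)) / C' := hgt
          _ ≤ (∑ t ∈ Finset.Icc 1 T, h T t ω) ^ 2 := hsum_ge T ω hT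
      rw [hempty]
      simp
    exact tendsto_const_nhds.congr' (hev.mono fun T hT => hT.symm)
  · -- Assumption 2
    refine ⟨2, one_lt_two, ?_⟩
    have hev : ∀ᶠ T : ℕ in atTop,
        (∫ ω, |(∑ t ∈ Finset.Icc 1 T, (h T t ω) ^ 2 / e t ω) /
          (∫ ω', ∑ t ∈ Finset.Icc 1 T, (h T t ω') ^ 2 / e t ω' ∂μ) - 1| ^ (2:ℝ) ∂μ) = 0 := by
      filter_upwards [eventually_ge_atTop 1] with T hT
      have hzero : ∀ ω, |(∑ t ∈ Finset.Icc 1 T, (h T t ω) ^ 2 / e t ω) /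
          (∫ ω', ∑ t ∈ Finset.Icc 1 T, (h T t ω') ^ 2 / e t ω' ∂μ) - 1| ^ (2:ℝ) = 0 := by
        intro ω
        rw [hint T hT, hS_eq_one T ω hT]
        norm_num
      calc (∫ ω, |(∑ t ∈ Finset.Icc 1 T, (h T t ω) ^ 2 / e t ω) /
            (∫ ω', ∑ t ∈ Finset.Icc 1 T, (h T t ω') ^ 2 / e t ω' ∂μ) - 1| ^ (2:ℝ) ∂μ)
          = ∫ _, (0:ℝ) ∂μ := integral_congr_ae (Filter.Eventually.of_forall hzero)
        _ = 0 := integral_zero _ _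
    exact tendsto_const_nhds.congr' (hev.mono fun T hT => hT.symm)
  · -- Assumption 3
    refine ⟨2, two_pos, fun ε hε => ?_⟩
    have hev : ∀ᶠ T : ℕ in atTop,
        (μ {ω | ε ≤ (∑ t ∈ Finset.Icc 1 T, h T t ω ^ ((2:ℝ) + 2) / e t ω ^ ((1:ℝ) + 2)) /
          (∫ ω', ∑ t ∈ Finset.Icc 1 T, (h T t ω') ^ 2 / e t ω' ∂μ) ^ ((1:ℝ) + 2 / 2)}).toReal
          = 0 := by
      filter_upwards [eventually_ge_atTop 1, htendB.eventually_lt_const hε] with T hT hlt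
      have hempty : {ω | ε ≤ (∑ t ∈ Finset.Icc 1 T, h T t ω ^ ((2:ℝ) + 2) / e t ω ^ ((1:ℝ) + 2)) /
          (∫ ω', ∑ t ∈ Finset.Icc 1 T, (h T t ω') ^ 2 / e t ω' ∂μ) ^ ((1:ℝ) + 2 / 2)} = ∅ := by
        ext ω
        simp only [Set.mem_setOf_eq, Set.mem_empty_iff_false, iff_false, not_le]
        rw [hint T hT, Real.one_rpow, div_one]
        have hterm : ∀ t ∈ Finset.Icc 1 T, h T t ω ^ ((2:ℝ) + 2) / e t ω ^ ((1:ℝ) + 2)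
            ≤ (h T t ω ^ 2 / e t ω) * (C' / ((1 - α) * (T:ℝ) ^ ((1:ℝ) - α))) := by
          intro t hts
          obtain ⟨ht1, htT⟩ := Finset.mem_Icc.mp hts
          have het := hepos t ω
          have h4 : h T t ω ^ ((2:ℝ) + 2) = h T t ω ^ (4:ℕ) := by
            rw [show (2:ℝ) + 2 = ((4:ℕ):ℝ) by norm_num, Real.rpow_natCast]
          have e3 : e t ω ^ ((1:ℝ) + 2) = e t ω ^ (3:ℕ) := by
            rw [show (1:ℝ) + 2 = ((3:ℕ):ℝ) by norm_num, Real.rpow_natCast]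
          rw [h4, e3]
          have hident : h T t ω ^ (4:ℕ) / e t ω ^ (3:ℕ)
              = (h T t ω ^ 2 / e t ω) * ((h T t ω / e t ω) ^ 2) := by
            field_simp
          rw [hident]
          exact mul_le_mul_of_nonneg_left (hB T t ω ht1 htT)
            (div_nonneg (sq_nonneg _) het.le)
        calc (∑ t ∈ Finset.Icc 1 T, h T t ω ^ ((2:ℝ) + 2) / e t ω ^ ((1:ℝ) + 2))
            ≤ ∑ t ∈ Finset.Icc 1 T,
              (h T t ω ^ 2 / e t ω) * (C' / ((1 - α) * (T:ℝ) ^ ((1:ℝ) - α))) :=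
              Finset.sum_le_sum hterm
          _ = (∑ t ∈ Finset.Icc 1 T, h T t ω ^ 2 / e t ω)
              * (C' / ((1 - α) * (T:ℝ) ^ ((1:ℝ) - α))) := by rw [← Finset.sum_mul]
          _ = C' / ((1 - α) * (T:ℝ) ^ ((1:ℝ) - α)) := by rw [hS_eq_one T ω hT, one_mul]
          _ < ε := hlt
      rw [hempty]
      simp
    exact tendsto_const_nhds.congr' (hev.mono fun T hT => hT.symm)
end

section
/- (General construction of variance-stabilizing weights.) Suppose the Riesz representers satisfy $\mathbb{E}_{t-1}[|\gamma_t|^{2+\delta}] / \mathbb{E}_{t-1}[\gamma_t^2]^{2+\delta} \leq C$ and $\mathbb{E}_{t-1}[\gamma_t^2] \leq C' t^{\alpha}$ for all $t$, for some $\delta>0$, $\alpha \in [0, \delta/(2+\delta))$, and positive constants $C, C'$. Then the variance-stabilizing weights defined by the recursion $h_t^2\,\mathbb{E}_{t-1}[\gamma_t^2] = (1 - \sum_{s=1}^{t-1} h_s^2\,\mathbb{E}_{s-1}[\gamma_s^2])\,\lambda_t$ satisfy the general infinite sampling, variance convergence, and bounded moments conditions, provided the allocation rate satisfies $\lambda_t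 < 1$ for $t<T$, $\lambda_T = 1$, and $\frac{1}{1+T-t} \leq \lambda_t \leq C''\,\frac{\mathbb{E}_{t-1}[\gamma_t^2]^{-1}}{t^{-\alpha} + T^{1-\alpha} - t^{1-\alpha}}$ for some positive constant $C''$. -/
/-!
The recursion is stick-breaking: the remaining mass `Rₜ = 1 - ∑_{s ≤ t} h_s² E_{s-1}[γ_s²]`
satisfies `Rₜ = R_{t-1} (1 - λₜ)`, so `λₜ ≥ 1/(1+T-t)` gives `Rₜ ≤ (T-t)/T` and `λ_T = 1` gives
`R_T = 0`. Hence `∑ₜ hₜ² E_{t-1}[γₜ²] = 1` almost surely and, by the pull-out property,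
`E[∑ₜ hₜ² γₜ²] = 1` exactly, which makes variance convergence trivial. Combined with the upper
bound on `λₜ` and the concavity of `x ↦ x^{1-α}`, the bound on `R_{t-1}` gives
`(hₜ E_{t-1}[γₜ²])² ≤ β_T := C''/((1-α) T^{1-α})` for every `t`. Therefore
`(∑ₜ hₜ)² ≥ 1/β_T → ∞`, and `∑ₜ hₜ^{2+δ} E_{t-1}|γₜ|^{2+δ} ≤ C T β_T^{1+δ/2} → 0`, the last limit
being where `α < δ/(2+δ)` is needed.
-/

open MeasureTheory ProbabilityTheory Filter Finset Topology
open scoped ENNReal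

namespace MeasureTheory

variable {Ω : Type*} {m m₀ : MeasurableSpace Ω} {μ : Measure[m₀] Ω}

theorem lintegral_mul_condLExp (hm : m ≤ m₀) [SigmaFinite (μ.trim hm)] {X : Ω → ℝ≥0∞}
    (hX : AEMeasurable X μ) {g : Ω → ℝ≥0∞} (hg : Measurable[m] g) :
    ∫⁻ ω, g ω * μ⁻[X|m] ω ∂μ = ∫⁻ ω, g ω * X ω ∂μ := by
  have hY : Measurable μ⁻[X|m] := measurable_condLExp' m μ X
  refine @Measurable.ennreal_induction Ω m
    (fun g => ∫⁻ ω, g ω * μ⁻[X|m] ω ∂μ = ∫⁻ ω, g ω * X ω ∂μ) ?_ ?_ ?_ g hg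
  · intro c s hs
    simp only [← Set.indicator_mul_left, lintegral_indicator (hm s hs),
      lintegral_const_mul _ hY, lintegral_const_mul'' _ hX.restrict,
      setLIntegral_condLExp hm μ X hs]
  · intro f₁ f₂ _ hf₁ _ ih₁ ih₂
    have hf₁' : Measurable[m₀] f₁ := hf₁.mono hm le_rfl
    simp only [Pi.add_apply, add_mul]
    rw [lintegral_add_left (by fun_prop), lintegral_add_left' (by fun_prop), ih₁, ih₂]
  · intro f hf hmono ih
    have hf' : ∀ n, Measurable[m₀] (f n) := fun n => (hf n).mono hm le_rfl
    have hmono' : ∀ Y : Ω → ℝ≥0∞, Monotone fun n ω => f n ω * Y ω :=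
      fun Y i j hij ω => mul_le_mul_left (hmono hij ω) _
    simp only [ENNReal.iSup_mul]
    rw [lintegral_iSup (fun n => by fun_prop) (hmono' _),
      lintegral_iSup' (fun n => by fun_prop) (ae_of_all _ fun ω i j hij => hmono' X hij ω)]
    simp only [ih]

variable {f X : Ω → ℝ}

theorem lintegral_ofReal_mul_condExp (hm : m ≤ m₀) [SigmaFinite (μ.trim hm)]
    (hf : StronglyMeasurable[m] f) (hf0 : 0 ≤ f) (hX : Integrable X μ) (hX0 : 0 ≤ᵐ[μ] X) :
    ∫⁻ ω, ENNReal.ofReal (f ω * μ[X|m] ω) ∂μ = ∫⁻ ω, ENNReal.ofReal (f ω * X ω) ∂μ := by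
  simp only [ENNReal.ofReal_mul (hf0 _)]
  rw [← lintegral_mul_condLExp hm hX.1.aemeasurable.ennreal_ofReal hf.measurable.ennreal_ofReal]
  refine lintegral_congr_ae ?_
  filter_upwards [condLExp_ofReal m hX hX0] with ω hω
  rw [hω]

theorem integral_mul_condExp_of_nonneg (hm : m ≤ m₀) [SigmaFinite (μ.trim hm)]
    (hf : StronglyMeasurable[m] f) (hf0 : 0 ≤ f) (hX : Integrable X μ) (hX0 : 0 ≤ᵐ[μ] X) :
    ∫ ω, f ω * μ[X|m] ω ∂μ = ∫ ω, f ω * X ω ∂μ := by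
  rw [integral_eq_lintegral_of_nonneg_ae, integral_eq_lintegral_of_nonneg_ae,
    lintegral_ofReal_mul_condExp hm hf hf0 hX hX0]
  · filter_upwards [hX0] with ω hω using mul_nonneg (hf0 ω) hω
  · exact (hf.mono hm).aestronglyMeasurable.mul hX.1
  · filter_upwards [condExp_nonneg (m := m) hX0] with ω hω using mul_nonneg (hf0 ω) hω
  · exact ((hf.mono hm).mul (stronglyMeasurable_condExp.mono hm)).aestronglyMeasurable

theorem Integrable.of_mul_condExp (hfX : Integrable (fun ω => f ω * μ[X|m] ω) μ)
    (hm : m ≤ m₀) [SigmaFinite (μ.trim hm)] (hf : StronglyMeasurable[m] f) (hf0 : 0 ≤ f)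
    (hX : Integrable X μ) (hX0 : 0 ≤ᵐ[μ] X) :
    Integrable (fun ω => f ω * X ω) μ := by
  refine ⟨(hf.mono hm).aestronglyMeasurable.mul hX.1, ?_⟩
  rw [hasFiniteIntegral_iff_ofReal (hX0.mono fun ω hω => mul_nonneg (hf0 ω) hω),
    ← lintegral_ofReal_mul_condExp hm hf hf0 hX hX0]
  exact (hasFiniteIntegral_iff_ofReal
    ((condExp_nonneg (m := m) hX0).mono fun ω hω => mul_nonneg (hf0 ω) hω)).1 hfX.2

theorem integral_sum_mul_eq_one_of_sum_mul_condExp {ι : Type*} [IsProbabilityMeasure μ]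
    (s : Finset ι) {m : ι → MeasurableSpace Ω} (hm : ∀ i, m i ≤ m₀) {f X : ι → Ω → ℝ}
    (hf : ∀ i ∈ s, StronglyMeasurable[m i] (f i)) (hf0 : ∀ i, 0 ≤ f i)
    (hX : ∀ i, Integrable (X i) μ) (hX0 : ∀ i, 0 ≤ᵐ[μ] X i)
    (hsum : ∀ᵐ ω ∂μ, ∑ i ∈ s, f i ω * μ[X i|m i] ω = 1) :
    ∫ ω, ∑ i ∈ s, f i ω * X i ω ∂μ = 1 := by
  have hnonneg : ∀ᵐ ω ∂μ, ∀ i ∈ s, 0 ≤ f i ω * μ[X i|m i] ω :=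
    (eventually_all_finset s).2 fun i _ => (condExp_nonneg (hX0 i)).mono fun ω hω =>
      mul_nonneg (hf0 i ω) hω
  have hint : ∀ i ∈ s, Integrable (fun ω => f i ω * μ[X i|m i] ω) μ := by
    refine fun i hi => Integrable.of_bound
      (((hf i hi).mono (hm i)).mul (stronglyMeasurable_condExp.mono (hm i))).aestronglyMeasurable
      1 ?_
    filter_upwards [hsum, hnonneg] with ω hω h0
    rw [Real.norm_of_nonneg (h0 i hi), ← hω]
    exact single_le_sum h0 hi
  calc ∫ ω, ∑ i ∈ s, f i ω * X i ω ∂μ = ∑ i ∈ s, ∫ ω, f i ω * X i ω ∂μ :=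
        integral_finsetSum s fun i hi =>
          (hint i hi).of_mul_condExp (hm i) (hf i hi) (hf0 i) (hX i) (hX0 i)
    _ = ∑ i ∈ s, ∫ ω, f i ω * μ[X i|m i] ω ∂μ := sum_congr rfl fun i hi =>
        (integral_mul_condExp_of_nonneg (hm i) (hf i hi) (hf0 i) (hX i) (hX0 i)).symm
    _ = 1 := by rw [← integral_finsetSum s hint, integral_congr_ae hsum]; simp

end MeasureTheory

/-- The tangent at `y` of the concave map `x ↦ x ^ (1 - α)` lies above its graph. -/
theorem one_sub_mul_rpow_neg_mul_sub_le_rpow_sub_rpow {x y α : ℝ} (hx : 0 < x) (hxy : x ≤ y)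
    (hα0 : 0 ≤ α) (hα1 : α ≤ 1) :
    (1 - α) * y ^ (-α) * (y - x) ≤ y ^ (1 - α) - x ^ (1 - α) := by
  have hy : 0 < y := hx.trans_le hxy
  have hbern := rpow_one_add_le_one_add_mul_self (by linarith [div_nonneg hx.le hy.le] :
    -1 ≤ x / y - 1) (by linarith : 0 ≤ 1 - α) (by linarith : 1 - α ≤ 1)
  rw [add_sub_cancel, Real.div_rpow hx.le hy.le] at hbern
  have hyα : y ^ (1 - α) = y ^ (-α) * y := by
    rw [← Real.rpow_add_one hy.ne']; ring_nf
  have hyα0 : 0 < y ^ (1 - α) := Real.rpow_pos_of_pos hy _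
  have := (div_le_iff₀ hyα0).1 hbern
  rw [hyα] at this ⊢
  field_simp at this
  linear_combination this

theorem one_sub_mul_rpow_neg_mul_one_add_sub_le {x y α : ℝ} (hx : 0 < x) (hxy : x ≤ y)
    (hα0 : 0 ≤ α) (hα1 : α ≤ 1) :
    (1 - α) * y ^ (-α) * (1 + y - x) ≤ x ^ (-α) + y ^ (1 - α) - x ^ (1 - α) := by
  have hyx : y ^ (-α) ≤ x ^ (-α) := Real.rpow_le_rpow_of_nonpos hx hxy (neg_nonpos.2 hα0)
  have hy : 0 ≤ y ^ (-α) := Real.rpow_nonneg (hx.le.trans hxy) _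
  linarith [one_sub_mul_rpow_neg_mul_sub_le_rpow_sub_rpow hx hxy hα0 hα1, mul_nonneg hα0 hy]

theorem one_le_mul_sq_sum_of_sum_sq_mul_eq_one {ι : Type*} {s : Finset ι} {H G : ι → ℝ} {β : ℝ}
    (hH : ∀ i ∈ s, 0 ≤ H i) (hsum : ∑ i ∈ s, H i ^ 2 * G i = 1)
    (hβ : ∀ i ∈ s, (H i * G i) ^ 2 ≤ β) :
    1 ≤ β * (∑ i ∈ s, H i) ^ 2 := by
  have hle : 1 ≤ √β * ∑ i ∈ s, H i := by
    rw [← hsum, mul_sum]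
    refine sum_le_sum fun i hi => ?_
    calc H i ^ 2 * G i = H i * (H i * G i) := by ring
      _ ≤ H i * √β := mul_le_mul_of_nonneg_left
          ((le_abs_self _).trans (Real.abs_le_sqrt (hβ i hi))) (hH i hi)
      _ = √β * H i := mul_comm _ _
  have hβ0 : 0 < β := Real.sqrt_pos.1 (pos_of_mul_pos_left (one_pos.trans_le hle)
    (sum_nonneg hH))
  calc (1 : ℝ) ≤ (√β * ∑ i ∈ s, H i) ^ 2 := one_le_pow₀ hle
    _ = β * (∑ i ∈ s, H i) ^ 2 := by rw [mul_pow, Real.sq_sqrt hβ0.le]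

theorem rpow_mul_le_of_div_rpow_le {H G K C β δ : ℝ} (hH : 0 ≤ H) (hG : 0 < G) (hC : 0 ≤ C)
    (hδ : 0 ≤ δ) (hK : K / G ^ (2 + δ) ≤ C) (hβ : (H * G) ^ 2 ≤ β) :
    H ^ (2 + δ) * K ≤ C * β ^ (1 + δ / 2) := by
  have hHG : (H * G) ^ (2 + δ) = ((H * G) ^ 2) ^ (1 + δ / 2) := by
    rw [← Real.rpow_natCast, ← Real.rpow_mul (by positivity)]; ring_nf
  calc H ^ (2 + δ) * K ≤ H ^ (2 + δ) * (C * G ^ (2 + δ)) :=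
        mul_le_mul_of_nonneg_left ((div_le_iff₀ (by positivity)).1 hK) (by positivity)
    _ = C * ((H * G) ^ 2) ^ (1 + δ / 2) := by rw [← hHG, Real.mul_rpow hH hG.le]; ring
    _ ≤ C * β ^ (1 + δ / 2) :=
        mul_le_mul_of_nonneg_left (Real.rpow_le_rpow (by positivity) hβ (by positivity)) hC

theorem tendsto_mul_div_rpow_rpow_atTop_zero {a p q : ℝ} (ha : 0 ≤ a) (hpq : 1 < p * q) :
    Tendsto (fun x : ℝ => x * (a / x ^ p) ^ q) atTop (𝓝 0) := by
  have := (tendsto_rpow_neg_atTop (by linarith : 0 < p * q - 1)).const_mul (a ^ q)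
  rw [mul_zero] at this
  refine this.congr' ((eventually_gt_atTop 0).mono fun x hx => ?_)
  dsimp only
  rw [Real.div_rpow ha (by positivity), ← Real.rpow_mul hx.le, neg_sub, Real.rpow_sub hx,
    Real.rpow_one]
  field_simp

section StickBreaking

variable {T : ℕ} {D L : ℕ → ℝ}

theorem one_sub_sum_Icc_mul_le_of_stickBreaking
    (hD : ∀ t ∈ Icc 1 T, D t = (1 - ∑ s ∈ Icc 1 (t - 1), D s) * L t)
    (hL : ∀ t ∈ Icc 1 T, 1 / (1 + (T : ℝ) - t) ≤ L t ∧ L t ≤ 1) {u : ℕ} (hu : u ≤ T) :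
    (1 - ∑ s ∈ Icc 1 u, D s) * T ≤ T - u := by
  induction u with
  | zero => simp
  | succ n ih =>
    have hn : n + 1 ∈ Icc 1 T := mem_Icc.2 ⟨n.succ_pos, hu⟩
    obtain ⟨hlow, hle⟩ := hL _ hn
    have hTn : (0 : ℝ) < T - n := by
      rw [sub_pos]; exact_mod_cast Nat.lt_of_succ_le hu
    rw [Nat.cast_succ, show 1 + (T : ℝ) - (n + 1) = T - n by ring, div_le_iff₀ hTn] at hlow
    have hrem : 1 - ∑ s ∈ Icc 1 (n + 1), D s = (1 - ∑ s ∈ Icc 1 n, D s) * (1 - L (n + 1)) := by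
      rw [sum_Icc_succ_top (Nat.le_add_left 1 n), hD _ hn, Nat.add_sub_cancel]; ring
    rw [hrem, Nat.cast_succ]
    linarith [mul_le_mul_of_nonneg_right (ih (Nat.le_of_succ_le hu)) (sub_nonneg.2 hle)]

theorem mul_le_of_stickBreaking
    (hD : ∀ t ∈ Icc 1 T, D t = (1 - ∑ s ∈ Icc 1 (t - 1), D s) * L t)
    (hL : ∀ t ∈ Icc 1 T, 1 / (1 + (T : ℝ) - t) ≤ L t ∧ L t ≤ 1) {t : ℕ} (ht : t ∈ Icc 1 T) :
    D t * T ≤ (1 + T - t) * L t := by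
  obtain ⟨ht1, htT⟩ := mem_Icc.1 ht
  have hrem := one_sub_sum_Icc_mul_le_of_stickBreaking hD hL (u := t - 1) (by omega)
  have hk : (0 : ℝ) ≤ 1 + T - t := by
    have : (t : ℝ) ≤ T := by exact_mod_cast htT
    linarith
  have hL0 : 0 ≤ L t := (one_div_nonneg.2 hk).trans (hL t ht).1
  rw [Nat.cast_sub ht1, Nat.cast_one] at hrem
  rw [hD t ht]
  linarith [mul_le_mul_of_nonneg_right hrem hL0]

theorem sum_Icc_eq_one_of_stickBreaking (hT : 1 ≤ T)
    (hD : D T = (1 - ∑ s ∈ Icc 1 (T - 1), D s) * L T) (hL : L T = 1) :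
    ∑ s ∈ Icc 1 T, D s = 1 := by
  obtain ⟨n, rfl⟩ := Nat.exists_eq_add_of_le' hT
  rw [sum_Icc_succ_top (Nat.le_add_left 1 n), hD, hL, Nat.add_sub_cancel]; ring

end StickBreaking

theorem sq_mul_le_of_allocation_le {α C'' H G L : ℝ} {t T : ℕ} (hα0 : 0 ≤ α) (hα1 : α < 1)
    (hC'' : 0 < C'') (ht : t ∈ Icc 1 T) (hHL : H ^ 2 * G * T ≤ (1 + T - t) * L)
    (hlow : 1 / (1 + (T : ℝ) - t) ≤ L)
    (hup : L ≤ C'' * G⁻¹ / ((t : ℝ) ^ (-α) + (T : ℝ) ^ (1 - α) - (t : ℝ) ^ (1 - α))) :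
    0 < G ∧ (H * G) ^ 2 ≤ C'' / (1 - α) / T ^ (1 - α) := by
  obtain ⟨ht1, htT⟩ := mem_Icc.1 ht
  have ht0 : (0 : ℝ) < t := by exact_mod_cast ht1
  have htT' : (t : ℝ) ≤ T := by exact_mod_cast htT
  have hT0 : (0 : ℝ) < T := ht0.trans_le htT'
  have hk : (0 : ℝ) < 1 + T - t := by linarith
  have hL : 0 < L := (one_div_pos.2 hk).trans_le hlow
  have hΦ := one_sub_mul_rpow_neg_mul_one_add_sub_le ht0 htT' hα0 hα1.le
  have hΦ0 : 0 < (t : ℝ) ^ (-α) + (T : ℝ) ^ (1 - α) - (t : ℝ) ^ (1 - α) :=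
    (mul_pos (mul_pos (by linarith) (Real.rpow_pos_of_pos hT0 _)) hk).trans_le hΦ
  have hG : 0 < G := inv_pos.1 <| pos_of_mul_pos_right
    ((div_pos_iff_of_pos_right hΦ0).1 (hL.trans_le hup)) hC''.le
  refine ⟨hG, ?_⟩
  have hLG : L * G * ((t : ℝ) ^ (-α) + (T : ℝ) ^ (1 - α) - (t : ℝ) ^ (1 - α)) ≤ C'' := by
    rw [le_div_iff₀ hΦ0] at hup
    calc L * G * _ = L * _ * G := by ring
      _ ≤ C'' * G⁻¹ * G := mul_le_mul_of_nonneg_right hup hG.le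
      _ = C'' := by field_simp
  have hTα : (T : ℝ) ^ (1 - α) = T * T ^ (-α) := by
    rw [sub_eq_neg_add, Real.rpow_add_one hT0.ne']; ring
  rw [div_div, le_div_iff₀ (mul_pos (by linarith) (Real.rpow_pos_of_pos hT0 _)), hTα]
  calc (H * G) ^ 2 * ((1 - α) * (T * (T : ℝ) ^ (-α)))
      = H ^ 2 * G * T * (G * ((1 - α) * (T : ℝ) ^ (-α))) := by ring
    _ ≤ (1 + T - t) * L * (G * ((1 - α) * (T : ℝ) ^ (-α))) :=
        mul_le_mul_of_nonneg_right hHL (by positivity)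
    _ = L * G * ((1 - α) * (T : ℝ) ^ (-α) * (1 + T - t)) := by ring
    _ ≤ L * G * ((t : ℝ) ^ (-α) + (T : ℝ) ^ (1 - α) - (t : ℝ) ^ (1 - α)) :=
        mul_le_mul_of_nonneg_left hΦ (mul_nonneg hL.le hG.le)
    _ ≤ C'' := hLG

theorem stickBreaking_bounds {T : ℕ} (hT : 1 ≤ T) {α δ C C'' : ℝ} (hα0 : 0 ≤ α) (hα1 : α < 1)
    (hδ : 0 ≤ δ) (hC : 0 ≤ C) (hC'' : 0 < C'') {H G L K : ℕ → ℝ} (hH : ∀ t, 0 ≤ H t)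
    (hrec : ∀ t ∈ Icc 1 T, H t ^ 2 * G t = (1 - ∑ s ∈ Icc 1 (t - 1), H s ^ 2 * G s) * L t)
    (hL : ∀ t ∈ Icc 1 T, 1 / (1 + (T : ℝ) - t) ≤ L t ∧
      L t ≤ C'' * (G t)⁻¹ / ((t : ℝ) ^ (-α) + (T : ℝ) ^ (1 - α) - (t : ℝ) ^ (1 - α)))
    (hle : ∀ t ∈ Icc 1 T, L t ≤ 1) (hlast : L T = 1)
    (hK : ∀ t ∈ Icc 1 T, K t / G t ^ (2 + δ) ≤ C) :
    ∑ t ∈ Icc 1 T, H t ^ 2 * G t = 1 ∧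
      1 ≤ C'' / (1 - α) / T ^ (1 - α) * (∑ t ∈ Icc 1 T, H t) ^ 2 ∧
      ∑ t ∈ Icc 1 T, H t ^ (2 + δ) * K t ≤
        T * (C * (C'' / (1 - α) / T ^ (1 - α)) ^ (1 + δ / 2)) := by
  have hsum := sum_Icc_eq_one_of_stickBreaking (D := fun t => H t ^ 2 * G t) hT
    (hrec T (right_mem_Icc.2 hT)) hlast
  have hterm : ∀ t ∈ Icc 1 T, 0 < G t ∧ (H t * G t) ^ 2 ≤ C'' / (1 - α) / T ^ (1 - α) :=
    fun t ht => sq_mul_le_of_allocation_le hα0 hα1 hC'' ht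
      (mul_le_of_stickBreaking hrec (fun s hs => ⟨(hL s hs).1, hle s hs⟩) ht) (hL t ht).1
      (hL t ht).2
  refine ⟨hsum, one_le_mul_sq_sum_of_sum_sq_mul_eq_one (fun t _ => hH t) hsum
    fun t ht => (hterm t ht).2, ?_⟩
  have := sum_le_card_nsmul _ _ _ fun t ht =>
    rpow_mul_le_of_div_rpow_le (hH t) (hterm t ht).1 hC hδ (hK t ht) (hterm t ht).2
  rwa [Nat.card_Icc, Nat.add_sub_cancel, nsmul_eq_mul] at this

theorem ae_stickBreaking_bounds {Ω : Type*} [MeasurableSpace Ω] {μ : Measure Ω} {T : ℕ}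
    (hT : 1 ≤ T) {α δ C C'' : ℝ} (hα0 : 0 ≤ α) (hα1 : α < 1) (hδ : 0 ≤ δ) (hC : 0 ≤ C)
    (hC'' : 0 < C'') {H G L K : ℕ → Ω → ℝ} (hH : ∀ t ω, 0 ≤ H t ω)
    (hrec : ∀ t, 1 ≤ t → t ≤ T → ∀ᵐ ω ∂μ,
      H t ω ^ 2 * G t ω = (1 - ∑ s ∈ Icc 1 (t - 1), H s ω ^ 2 * G s ω) * L t ω)
    (hL : ∀ t, 1 ≤ t → t ≤ T → ∀ᵐ ω ∂μ, 1 / (1 + (T : ℝ) - t) ≤ L t ω ∧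
      L t ω ≤ C'' * (G t ω)⁻¹ / ((t : ℝ) ^ (-α) + (T : ℝ) ^ (1 - α) - (t : ℝ) ^ (1 - α)))
    (hlt : ∀ t ω, 1 ≤ t → t < T → L t ω < 1) (hlast : ∀ ω, L T ω = 1)
    (hK : ∀ t, 1 ≤ t → ∀ᵐ ω ∂μ, K t ω / G t ω ^ (2 + δ) ≤ C) :
    ∀ᵐ ω ∂μ, ∑ t ∈ Icc 1 T, H t ω ^ 2 * G t ω = 1 ∧
      1 ≤ C'' / (1 - α) / T ^ (1 - α) * (∑ t ∈ Icc 1 T, H t ω) ^ 2 ∧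
      ∑ t ∈ Icc 1 T, H t ω ^ (2 + δ) * K t ω ≤
        T * (C * (C'' / (1 - α) / T ^ (1 - α)) ^ (1 + δ / 2)) := by
  have hall : ∀ᵐ ω ∂μ, ∀ t ∈ Icc 1 T,
      (H t ω ^ 2 * G t ω = (1 - ∑ s ∈ Icc 1 (t - 1), H s ω ^ 2 * G s ω) * L t ω) ∧
      (1 / (1 + (T : ℝ) - t) ≤ L t ω ∧
        L t ω ≤ C'' * (G t ω)⁻¹ / ((t : ℝ) ^ (-α) + (T : ℝ) ^ (1 - α) - (t : ℝ) ^ (1 - α))) ∧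
      K t ω / G t ω ^ (2 + δ) ≤ C := by
    refine (eventually_all_finset _).2 fun t ht => ?_
    obtain ⟨ht1, htT⟩ := mem_Icc.1 ht
    filter_upwards [hrec t ht1 htT, hL t ht1 htT, hK t ht1] with ω h₁ h₂ h₃ using ⟨h₁, h₂, h₃⟩
  filter_upwards [hall] with ω hω
  refine stickBreaking_bounds hT hα0 hα1 hδ hC hC'' (hH · ω) (fun t ht => (hω t ht).1)
    (fun t ht => (hω t ht).2.1) (fun t ht => ?_) (hlast ω) (fun t ht => (hω t ht).2.2)
  obtain ⟨ht1, htT⟩ := mem_Icc.1 ht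
  rcases htT.lt_or_eq with htT | rfl
  exacts [(hlt t ω ht1 htT).le, (hlast ω).le]

theorem tendsto_measure_toReal_zero_of_eventually_ae_not {Ω ι : Type*} [MeasurableSpace Ω]
    {μ : Measure Ω} {l : Filter ι} {p : ι → Ω → Prop} (h : ∀ᶠ i in l, ∀ᵐ ω ∂μ, ¬p i ω) :
    Tendsto (fun i => (μ {ω | p i ω}).toReal) l (𝓝 0) := by
  refine tendsto_const_nhds.congr' (h.mono fun i hi => ?_)
  simp only [ae_iff, not_not] at hi
  simp [hi]

theorem general_variance_stabilizing_weights_general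
    {Ω : Type*} [mΩ : MeasurableSpace Ω] (μ : Measure Ω) [IsProbabilityMeasure μ]
    {𝒲 : Type*}
    (ℱ : Filtration ℕ mΩ)
    (W : ℕ → Ω → 𝒲) (γ : ℕ → Ω → 𝒲 → ℝ) (h lam : ℕ → ℕ → Ω → ℝ)
    (δ α C C'' : ℝ)
    (hδ : 0 < δ) (hα0 : 0 ≤ α) (hα1 : α < δ / (2 + δ))
    (hC : 0 < C) (hC'' : 0 < C'')
    -- the Riesz representers are history-adapted, measurable and square-integrable
    (hγsq : ∀ t, Integrable (fun ω => γ t ω (W t ω) ^ 2) μ)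
    -- moment growth conditions on the Riesz representers
    (hmomratio : ∀ (t : ℕ), 1 ≤ t → ∀ᵐ ω ∂μ,
      (μ[(fun ω' => abs (γ t ω' (W t ω')) ^ ((2 : ℝ) + δ))|ℱ (t - 1)]) ω /
        ((μ[(fun ω' => γ t ω' (W t ω') ^ 2)|ℱ (t - 1)]) ω) ^ ((2 : ℝ) + δ) ≤ C)
    -- the allocation rate: history-adapted, `< 1` before `T`, `= 1` at `T`, bounded
    (hlam_lt : ∀ T t ω, 1 ≤ t → t < T → lam T t ω < 1)
    (hlam_last : ∀ T ω, 1 ≤ T → lam T T ω = 1)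
    (hlam_bounds : ∀ (T t : ℕ), 1 ≤ t → t ≤ T → ∀ᵐ ω ∂μ,
      1 / (1 + (T : ℝ) - t) ≤ lam T t ω ∧
      lam T t ω ≤ C'' * ((μ[(fun ω' => γ t ω' (W t ω') ^ 2)|ℱ (t - 1)]) ω)⁻¹ /
        ((t : ℝ) ^ (-α) + (T : ℝ) ^ ((1 : ℝ) - α) - (t : ℝ) ^ ((1 : ℝ) - α)))
    -- the variance-stabilizing weights: non-negative, history-adapted, and
    -- defined by the stick-breaking recursion
    (hh_nonneg : ∀ T t ω, 0 ≤ h T t ω)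
    (hh_meas : ∀ T t, 1 ≤ t → t ≤ T → StronglyMeasurable[ℱ (t - 1)] (h T t))
    (hrec : ∀ (T t : ℕ), 1 ≤ t → t ≤ T → ∀ᵐ ω ∂μ,
      (h T t ω) ^ 2 * (μ[(fun ω' => γ t ω' (W t ω') ^ 2)|ℱ (t - 1)]) ω =
        (1 - ∑ s ∈ Finset.Icc 1 (t - 1),
          (h T s ω) ^ 2 * (μ[(fun ω' => γ s ω' (W s ω') ^ 2)|ℱ (s - 1)]) ω) * lam T t ω) :
    -- general infinite-sampling condition
    (∀ M : ℝ, Tendsto (fun T =>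
      (μ {ω | (∑ t ∈ Finset.Icc 1 T, h T t ω) ^ 2 ≤
        M * ∫ ω', ∑ t ∈ Finset.Icc 1 T, (h T t ω') ^ 2 * γ t ω' (W t ω') ^ 2 ∂μ}).toReal)
      atTop (𝓝 0)) ∧
    -- general variance-convergence condition (in Lᵖ for some p > 1)
    (∃ p : ℝ, 1 < p ∧ Tendsto (fun T => ∫ ω,
      abs ((∑ t ∈ Finset.Icc 1 T,
          (h T t ω) ^ 2 * (μ[(fun ω' => γ t ω' (W t ω') ^ 2)|ℱ (t - 1)]) ω) /
          (∫ ω', ∑ t ∈ Finset.Icc 1 T, (h T t ω') ^ 2 * γ t ω' (W t ω') ^ 2 ∂μ) - 1) ^ p ∂μ)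
      atTop (𝓝 0)) ∧
    -- general bounded-moments condition (for some δ' > 0)
    (∃ δ' : ℝ, 0 < δ' ∧ ∀ ε : ℝ, 0 < ε → Tendsto (fun T =>
      (μ {ω | ε ≤
        (∑ t ∈ Finset.Icc 1 T,
          h T t ω ^ ((2 : ℝ) + δ') * (μ[(fun ω' => abs (γ t ω' (W t ω')) ^ ((2 : ℝ) + δ'))|ℱ (t - 1)]) ω) /
          (∫ ω', ∑ t ∈ Finset.Icc 1 T, (h T t ω') ^ 2 * γ t ω' (W t ω') ^ 2 ∂μ) ^ ((1 : ℝ) + δ' / 2)}).toReal)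
      atTop (𝓝 0)) := by
  have hα1' : α < 1 := hα1.trans ((div_lt_one (by linarith)).2 (by linarith))
  have hβ : Tendsto (fun T : ℕ => C'' / (1 - α) / (T : ℝ) ^ (1 - α)) atTop (𝓝 0) :=
    (tendsto_const_nhds.div_atTop (tendsto_rpow_atTop (by linarith))).comp
      tendsto_natCast_atTop_atTop
  have hbounds := fun T (hT : 1 ≤ T) => ae_stickBreaking_bounds (μ := μ) hT hα0 hα1' hδ.le hC.le
    hC'' (hh_nonneg T) (hrec T) (hlam_bounds T) (hlam_lt T) (fun ω => hlam_last T ω hT) hmomratio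
  have hnorm : ∀ T, 1 ≤ T →
      ∫ ω, ∑ t ∈ Icc 1 T, h T t ω ^ 2 * γ t ω (W t ω) ^ 2 ∂μ = 1 := fun T hT =>
    integral_sum_mul_eq_one_of_sum_mul_condExp _ (fun t => ℱ.le (t - 1))
      (fun t ht => (hh_meas T t (mem_Icc.1 ht).1 (mem_Icc.1 ht).2).pow 2)
      (fun _ _ => sq_nonneg _) hγsq (fun _ => ae_of_all _ fun _ => sq_nonneg _)
      ((hbounds T hT).mono fun _ hω => hω.1)
  refine ⟨fun M => ?_, ⟨2, one_lt_two, ?_⟩, ⟨δ, hδ, fun ε hε => ?_⟩⟩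
  · refine tendsto_measure_toReal_zero_of_eventually_ae_not ?_
    filter_upwards [(hβ.mul_const M).eventually_lt_const (by simp : (0 : ℝ) * M < 1),
      eventually_ge_atTop 1] with T hβM hT
    filter_upwards [hbounds T hT] with ω hω hle
    rw [hnorm T hT, mul_one] at hle
    have hβ0 : 0 ≤ C'' / (1 - α) / (T : ℝ) ^ (1 - α) := by positivity
    linarith [hω.2.1, mul_le_mul_of_nonneg_left hle hβ0]
  · refine tendsto_const_nhds.congr' ((eventually_ge_atTop 1).mono fun T hT => ?_)
    dsimp only
    rw [hnorm T hT, integral_eq_zero_of_ae]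
    filter_upwards [hbounds T hT] with ω hω
    simp [hω.1]
  · refine tendsto_measure_toReal_zero_of_eventually_ae_not ?_
    have hpq : 1 < (1 - α) * (1 + δ / 2) := by
      have := (lt_div_iff₀ (by linarith)).1 hα1
      linarith
    have hmom : Tendsto (fun T : ℕ =>
        C * ((T : ℝ) * (C'' / (1 - α) / (T : ℝ) ^ (1 - α)) ^ (1 + δ / 2))) atTop (𝓝 0) := by
      simpa using ((tendsto_mul_div_rpow_rpow_atTop_zero (div_nonneg hC''.le (by linarith))
        hpq).comp tendsto_natCast_atTop_atTop).const_mul C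
    filter_upwards [hmom.eventually_lt_const hε, eventually_ge_atTop 1] with T hTε hT
    filter_upwards [hbounds T hT] with ω hω hle
    rw [hnorm T hT, Real.one_rpow, div_one] at hle
    linarith [hω.2.2]

/-- **Theorem 5 (general construction of variance-stabilizing weights).**
Suppose the Riesz representers satisfy `E_{t-1}|γₜ|^{2+δ} / (E_{t-1}[γₜ²])^{2+δ} ≤ C`
and `E_{t-1}[γₜ²] ≤ C' t^α` for some `δ > 0`, `α ∈ [0, δ/(2+δ))` and positive `C, C'`.
Then the triangular array of variance-stabilizing weights defined by the recursion
`hₜ² E_{t-1}[γₜ²] = (1 - ∑_{s<t} h_s² E_{s-1}[γ_s²]) λₜ` satisfies the general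
infinite-sampling, variance-convergence and bounded-moments conditions, provided the
history-adapted allocation rate satisfies `λₜ < 1` for `t < T`, `λ_T = 1` and
`1/(1+T-t) ≤ λₜ ≤ C'' (E_{t-1}[γₜ²])⁻¹ / (t^{-α} + T^{1-α} - t^{1-α})`. -/
theorem general_variance_stabilizing_weights
    {Ω : Type*} [mΩ : MeasurableSpace Ω] (μ : Measure Ω) [IsProbabilityMeasure μ]
    {𝒲 : Type*} [MeasurableSpace 𝒲]
    (ℱ : Filtration ℕ mΩ)
    (W : ℕ → Ω → 𝒲) (γ : ℕ → Ω → 𝒲 → ℝ) (h lam : ℕ → ℕ → Ω → ℝ)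
    (δ α C C' C'' : ℝ)
    (hδ : 0 < δ) (hα0 : 0 ≤ α) (hα1 : α < δ / (2 + δ))
    (hC : 0 < C) (hC' : 0 < C') (hC'' : 0 < C'')
    -- the Riesz representers are history-adapted, measurable and square-integrable
    (hWmeas : ∀ t, Measurable[ℱ t] (W t))
    (hγadapt : ∀ t w', 1 ≤ t → StronglyMeasurable[ℱ (t - 1)] fun ω => γ t ω w')
    (hγWmeas : ∀ t, Measurable fun ω => γ t ω (W t ω))
    (hγsq : ∀ t, Integrable (fun ω => γ t ω (W t ω) ^ 2) μ)
    -- moment growth conditions on the Riesz representers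
    (hmomratio : ∀ (t : ℕ), 1 ≤ t → ∀ᵐ ω ∂μ,
      (μ[(fun ω' => abs (γ t ω' (W t ω')) ^ ((2 : ℝ) + δ))|ℱ (t - 1)]) ω /
        ((μ[(fun ω' => γ t ω' (W t ω') ^ 2)|ℱ (t - 1)]) ω) ^ ((2 : ℝ) + δ) ≤ C)
    (hgrowth : ∀ (t : ℕ), 1 ≤ t → ∀ᵐ ω ∂μ,
      (μ[(fun ω' => γ t ω' (W t ω') ^ 2)|ℱ (t - 1)]) ω ≤ C' * (t : ℝ) ^ α)
    -- the allocation rate: history-adapted, `< 1` before `T`, `= 1` at `T`, bounded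
    (hlam_meas : ∀ T t, 1 ≤ t → t ≤ T → StronglyMeasurable[ℱ (t - 1)] (lam T t))
    (hlam_lt : ∀ T t ω, 1 ≤ t → t < T → lam T t ω < 1)
    (hlam_last : ∀ T ω, 1 ≤ T → lam T T ω = 1)
    (hlam_bounds : ∀ (T t : ℕ), 1 ≤ t → t ≤ T → ∀ᵐ ω ∂μ,
      1 / (1 + (T : ℝ) - t) ≤ lam T t ω ∧
      lam T t ω ≤ C'' * ((μ[(fun ω' => γ t ω' (W t ω') ^ 2)|ℱ (t - 1)]) ω)⁻¹ /
        ((t : ℝ) ^ (-α) + (T : ℝ) ^ ((1 : ℝ) - α) - (t : ℝ) ^ ((1 : ℝ) - α)))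
    -- the variance-stabilizing weights: non-negative, history-adapted, and
    -- defined by the stick-breaking recursion
    (hh_nonneg : ∀ T t ω, 0 ≤ h T t ω)
    (hh_meas : ∀ T t, 1 ≤ t → t ≤ T → StronglyMeasurable[ℱ (t - 1)] (h T t))
    (hrec : ∀ (T t : ℕ), 1 ≤ t → t ≤ T → ∀ᵐ ω ∂μ,
      (h T t ω) ^ 2 * (μ[(fun ω' => γ t ω' (W t ω') ^ 2)|ℱ (t - 1)]) ω =
        (1 - ∑ s ∈ Finset.Icc 1 (t - 1),
          (h T s ω) ^ 2 * (μ[(fun ω' => γ s ω' (W s ω') ^ 2)|ℱ (s - 1)]) ω) * lam T t ω) :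
    -- general infinite-sampling condition
    (∀ M : ℝ, Tendsto (fun T =>
      (μ {ω | (∑ t ∈ Finset.Icc 1 T, h T t ω) ^ 2 ≤
        M * ∫ ω', ∑ t ∈ Finset.Icc 1 T, (h T t ω') ^ 2 * γ t ω' (W t ω') ^ 2 ∂μ}).toReal)
      atTop (𝓝 0)) ∧
    -- general variance-convergence condition (in Lᵖ for some p > 1)
    (∃ p : ℝ, 1 < p ∧ Tendsto (fun T => ∫ ω,
      abs ((∑ t ∈ Finset.Icc 1 T,
          (h T t ω) ^ 2 * (μ[(fun ω' => γ t ω' (W t ω') ^ 2)|ℱ (t - 1)]) ω) /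
          (∫ ω', ∑ t ∈ Finset.Icc 1 T, (h T t ω') ^ 2 * γ t ω' (W t ω') ^ 2 ∂μ) - 1) ^ p ∂μ)
      atTop (𝓝 0)) ∧
    -- general bounded-moments condition (for some δ' > 0)
    (∃ δ' : ℝ, 0 < δ' ∧ ∀ ε : ℝ, 0 < ε → Tendsto (fun T =>
      (μ {ω | ε ≤
        (∑ t ∈ Finset.Icc 1 T,
          h T t ω ^ ((2 : ℝ) + δ') * (μ[(fun ω' => abs (γ t ω' (W t ω')) ^ ((2 : ℝ) + δ'))|ℱ (t - 1)]) ω) /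
          (∫ ω', ∑ t ∈ Finset.Icc 1 T, (h T t ω') ^ 2 * γ t ω' (W t ω') ^ 2 ∂μ) ^ ((1 : ℝ) + δ' / 2)}).toReal)
      atTop (𝓝 0)) :=
  general_variance_stabilizing_weights_general (mΩ := mΩ) μ ℱ W γ h lam δ α C C'' hδ hα0 hα1 hC hC''
    hγsq hmomratio hlam_lt hlam_last hlam_bounds hh_nonneg hh_meas hrec
end

section
/- For every $\alpha \in [0,1)$, the function $f_\alpha(x,c) := \frac{1-x+c}{1-x^{1-\alpha}+c\,x^{-\alpha}}$ is uniformly bounded on the domain $x \in (0,1)$, $c > 0$: it satisfies $f_\alpha(x,c) \leq f_\alpha(x,0) = \frac{1-x}{1-x^{1-\alpha}}$ for all such $x, c$; the map $x \mapsto f_\alpha(x,0)$ is increasing on $(0,1)$; and $\lim_{x\to 1^-} f_\alpha(x,0) = \frac{1}{1-\alpha}$, so that $f_\alpha(x,c) \leq \frac{1}{1-\alpha}$ on the whole domain. -/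
/-! With `β = 1 - α ∈ (0, 1]`, `f_α(x, 0)` is the reciprocal of the slope of the concave map
`t ↦ t ^ β` between `x` and `1`. Concavity makes this slope decrease in `x`, and it tends to the
derivative `β` at `1`, so `f_α(·, 0)` increases to `1 / β`, which therefore bounds it. Adding
`c > 0` only lowers `f_α`: after cross-multiplying, the difference is `c (x^{-α} - 1) ≥ 0`. -/

open Topology

/-- The auxiliary function `f_α(x, c) = (1 - x + c)/(1 - x^{1-α} + c x^{-α})`. -/
noncomputable def fAlpha (α x c : ℝ) : ℝ :=
  (1 - x + c) / (1 - x ^ ((1 : ℝ) - α) + c * x ^ (-α))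

open Filter Set

theorem MonotoneOn.le_of_tendsto_nhdsLT {α β : Type*} [LinearOrder α] [TopologicalSpace α]
    [OrderTopology α] [DenselyOrdered α] [Preorder β] [TopologicalSpace β] [OrderClosedTopology β]
    {f : α → β} {a b : α} {L : β} (hf : MonotoneOn f (Ioo a b)) (hL : Tendsto f (𝓝[<] b) (𝓝 L))
    {x : α} (hx : x ∈ Ioo a b) : f x ≤ L := by
  have : (𝓝[<] b).NeBot := nhdsLT_neBot_of_exists_lt ⟨a, hx.1.trans hx.2⟩
  refine ge_of_tendsto hL ?_
  filter_upwards [Ioo_mem_nhdsLT hx.2] with y hy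
  exact hf hx ⟨hx.1.trans hy.1, hy.2⟩ hy.1.le

namespace Real

theorem slope_rpow_one_pos {β x : ℝ} (hβ : 0 < β) (hx₀ : 0 < x) (hx₁ : x < 1) :
    0 < slope (fun t : ℝ => t ^ β) 1 x := by
  rw [slope_def_field, one_rpow]
  exact div_pos_of_neg_of_neg (by linarith [rpow_lt_one hx₀.le hx₁ hβ]) (by linarith)

theorem antitoneOn_slope_rpow_one {β : ℝ} (hβ₀ : 0 ≤ β) (hβ₁ : β ≤ 1) :
    AntitoneOn (slope (fun t : ℝ => t ^ β) 1) (Ioo 0 1) := by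
  intro x hx y hy hxy
  have h := (concaveOn_rpow hβ₀ hβ₁).neg.secant_mono (a := 1) (by simp) (mem_Ici.2 hx.1.le)
    (mem_Ici.2 hy.1.le) hx.2.ne hy.2.ne hxy
  rw [← slope_def_field, ← slope_def_field, slope_neg_fun, Pi.neg_apply, Pi.neg_apply] at h
  exact neg_le_neg_iff.1 h

theorem tendsto_slope_rpow_one (β : ℝ) :
    Tendsto (slope (fun t : ℝ => t ^ β) 1) (𝓝[≠] 1) (𝓝 β) := by
  simpa using hasDerivAt_iff_tendsto_slope.1
    (hasDerivAt_rpow_const (x := 1) (p := β) (Or.inl one_ne_zero))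

end Real

open Real

theorem fAlpha_zero_eq (α x : ℝ) : fAlpha α x 0 = (1 - x) / (1 - x ^ ((1 : ℝ) - α)) := by
  simp [fAlpha]

theorem fAlpha_zero_eq_inv_slope (α : ℝ) :
    (fun x => fAlpha α x 0) = fun x => (slope (fun t : ℝ => t ^ (1 - α)) 1 x)⁻¹ := by
  ext x
  rw [fAlpha_zero_eq, slope_def_field, one_rpow, inv_div, ← neg_div_neg_eq, neg_sub, neg_sub]

theorem fAlpha_le_fAlpha_zero {α x c : ℝ} (hα₀ : 0 ≤ α) (hα₁ : α < 1) (hx₀ : 0 < x) (hx₁ : x < 1)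
    (hc : 0 ≤ c) : fAlpha α x c ≤ fAlpha α x 0 := by
  have hx_rpow : x ^ ((1 : ℝ) - α) = x ^ (-α) * x := by
    rw [sub_eq_neg_add, rpow_add hx₀, rpow_one]
  have hD₀ : 0 < 1 - x ^ ((1 : ℝ) - α) := by
    linarith [rpow_lt_one hx₀.le hx₁ (by linarith : (0 : ℝ) < 1 - α)]
  have hD : 0 < 1 - x ^ ((1 : ℝ) - α) + c * x ^ (-α) := by positivity
  have h_one_le : 1 ≤ x ^ (-α) := one_le_rpow_of_pos_of_le_one_of_nonpos hx₀ hx₁.le (by linarith)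
  rw [fAlpha, fAlpha_zero_eq, div_le_div_iff₀ hD hD₀, ← sub_nonneg]
  have hdiff : (1 - x) * (1 - x ^ ((1 : ℝ) - α) + c * x ^ (-α)) -
      (1 - x + c) * (1 - x ^ ((1 : ℝ) - α)) = c * (x ^ (-α) - 1) := by
    rw [hx_rpow]; ring
  rw [hdiff]
  exact mul_nonneg hc (sub_nonneg.2 h_one_le)

theorem monotoneOn_fAlpha_zero {α : ℝ} (hα₀ : 0 ≤ α) (hα₁ : α < 1) :
    MonotoneOn (fun x => fAlpha α x 0) (Ioo 0 1) := by
  rw [fAlpha_zero_eq_inv_slope]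
  intro x hx y hy hxy
  exact inv_anti₀ (slope_rpow_one_pos (by linarith) hy.1 hy.2)
    (antitoneOn_slope_rpow_one (by linarith) (by linarith) hx hy hxy)

theorem tendsto_fAlpha_zero_nhdsLT_one {α : ℝ} (hα₁ : α < 1) :
    Tendsto (fun x => fAlpha α x 0) (𝓝[<] 1) (𝓝 (1 / (1 - α))) := by
  rw [fAlpha_zero_eq_inv_slope, one_div]
  exact ((tendsto_slope_rpow_one _).inv₀ (by linarith)).mono_left
    (nhdsWithin_mono _ fun _ hx => ne_of_lt hx)

/-- **Uniform boundedness of `f_α`.**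
For every `α ∈ [0, 1)`: on the domain `x ∈ (0,1)`, `c > 0` one has
`f_α(x,c) ≤ f_α(x,0) = (1-x)/(1-x^{1-α})`; the map `x ↦ f_α(x,0)` is increasing on
`(0,1)`; `f_α(x,0) → 1/(1-α)` as `x → 1⁻`; and hence `f_α(x,c) ≤ 1/(1-α)` on the
whole domain. -/
theorem fAlpha_bounds (α : ℝ) (hα0 : 0 ≤ α) (hα1 : α < 1) :
    (∀ x c : ℝ, 0 < x → x < 1 → 0 < c → fAlpha α x c ≤ fAlpha α x 0) ∧
    (∀ x : ℝ, 0 < x → x < 1 →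
      fAlpha α x 0 = (1 - x) / (1 - x ^ ((1 : ℝ) - α))) ∧
    (MonotoneOn (fun x => fAlpha α x 0) (Set.Ioo (0 : ℝ) 1)) ∧
    (Filter.Tendsto (fun x => fAlpha α x 0) (𝓝[<] (1 : ℝ)) (𝓝 (1 / (1 - α)))) ∧
    (∀ x c : ℝ, 0 < x → x < 1 → 0 < c → fAlpha α x c ≤ 1 / (1 - α)) := by
  have hle : ∀ x c : ℝ, 0 < x → x < 1 → 0 < c → fAlpha α x c ≤ fAlpha α x 0 :=
    fun x c hx₀ hx₁ hc => fAlpha_le_fAlpha_zero hα0 hα1 hx₀ hx₁ hc.le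
  have hmono := monotoneOn_fAlpha_zero hα0 hα1
  have hlim := tendsto_fAlpha_zero_nhdsLT_one hα1
  refine ⟨hle, fun x _ _ => fAlpha_zero_eq α x, hmono, hlim, fun x c hx₀ hx₁ hc => ?_⟩
  exact (hle x c hx₀ hx₁ hc).trans (hmono.le_of_tendsto_nhdsLT hlim ⟨hx₀, hx₁⟩)
end
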